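/- arXiv:2007.14637 — 5 statements merged into one kernel-verified Lean document; each statement's English description precedes it below -/
import Mathlib

section
/- If G = F ⊕ K ⊕ Q is a direct sum where F is free and Q is divisible (both having the cancellation property), then G has the cancellation property if and only if K has the cancellation property. -/
open TensorProduct

/-- An abelian group `G` has the cancellation property if `G ⊕ H ≅ G ⊕ K` implies `H ≅ K`. -/
def HasCancellation (G : Type) [AddCommGroup G] : Prop :=
  ∀ (H K : Type) [AddCommGroup H] [AddCommGroup K],
    Nonempty ((G × H) ≃+ (G × K)) → Nonempty (H ≃+ K)

/-- Associativity of products as an additive equivalence. -/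
def addProdAssoc (A B C : Type) [AddCommGroup A] [AddCommGroup B] [AddCommGroup C] :
    (A × B) × C ≃+ A × (B × C) :=
  { Equiv.prodAssoc A B C with map_add' := fun _ _ => rfl }

theorem HasCancellation.prod {G₁ G₂ : Type} [AddCommGroup G₁] [AddCommGroup G₂]
    (h₁ : HasCancellation G₁) (h₂ : HasCancellation G₂) : HasCancellation (G₁ × G₂) := by
  intro H K _ _ ⟨e⟩
  refine h₂ H K (h₁ (G₂ × H) (G₂ × K) ⟨?_⟩)
  exact (addProdAssoc G₁ G₂ H).symm.trans (e.trans (addProdAssoc G₁ G₂ K))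

/-- A permutation equivalence used below. -/
def permEquiv (F K Q X : Type) [AddCommGroup F] [AddCommGroup K] [AddCommGroup Q]
    [AddCommGroup X] : (F × K × Q) × X ≃+ F × (K × X) × Q :=
  (addProdAssoc F (K × Q) X).trans <|
    AddEquiv.prodCongr (AddEquiv.refl F) <|
      (addProdAssoc K Q X).trans <|
        (AddEquiv.prodCongr (AddEquiv.refl K) (AddEquiv.prodComm : Q × X ≃+ X × Q)).trans
          (addProdAssoc K X Q).symm

/-- If `G = F ⊕ K ⊕ Q` where `F` is a finitely generated free abelian group and `Q` is a
finite rank divisible torsion-free abelian group, both having the cancellation property,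
then `G` has the cancellation property if and only if `K` has the cancellation property. -/
theorem cancellation_free_divisible_reduction
    (F K Q : Type) [AddCommGroup F] [AddCommGroup K] [AddCommGroup Q]
    [Module.Free ℤ F] [Module.Finite ℤ F]
    (hQdiv : ∀ n : ℕ, 0 < n → ∀ q : Q, ∃ r : Q, n • r = q)
    [NoZeroSMulDivisors ℤ Q] [Module.Finite ℚ (ℚ ⊗[ℤ] Q)]
    (hF : HasCancellation F) (hQ : HasCancellation Q) :
    HasCancellation (F × K × Q) ↔ HasCancellation K := by
  constructor
  · intro h H K' _ _ ⟨e⟩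
    refine h H K' ⟨?_⟩
    exact (permEquiv F K Q H).trans <|
      (AddEquiv.prodCongr (AddEquiv.refl F)
        (AddEquiv.prodCongr e (AddEquiv.refl Q))).trans (permEquiv F K Q K').symm
  · intro hK
    exact hF.prod (hK.prod hQ)
end

section
/- If A and B are abelian groups each having the cancellation property, then A ⊕ B has the cancellation property. -/
/-- If `A` and `B` are abelian groups each having the cancellation property, then `A ⊕ B`
has the cancellation property. -/
theorem cancellation_prod (A B : Type) [AddCommGroup A] [AddCommGroup B]
    (hA : HasCancellation A) (hB : HasCancellation B) :
    HasCancellation (A × B) := by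
  intro H K _ _ ⟨e⟩
  have h1 : Nonempty ((A × (B × H)) ≃+ (A × (B × K))) :=
    ⟨(AddEquiv.prodAssoc).symm.trans (e.trans AddEquiv.prodAssoc)⟩
  obtain ⟨e2⟩ := hA _ _ h1
  exact hB _ _ ⟨e2⟩
end

section
/- Let G be an abelian group whose p-component T_p(G) is finite for every prime p. If F is a full free subgroup of G (i.e., free with G/F torsion) and G/F is p-divisible for almost all primes p with T_p(G) ≠ 0, then Hom(G, T(G)) is a torsion group. -/
/-!
Since `F` is finitely generated and `T(G)` is torsion, some multiple `N • f` of a homomorphism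
`f : G → T(G)` kills `F`, so it factors through the torsion group `G/F`. A homomorphism
`h : G/F → G` maps the `p`-component of `G/F` into `T_p(G)`, which is killed by `p ^ |T_p(G)|`.
If `G/F` is `p`-divisible, every `p`-primary element of `G/F` is `p ^ |T_p(G)|` times a `p`-primary
element, so `h` kills the `p`-component outright. Only finitely many primes remain, and since
`G/F` is generated by its primary components, the product `M` of their powers `p ^ |T_p(G)|`
satisfies `M • h = 0`; hence `(M * N) • f = 0`.
-/

open TensorProduct

/-- The `p`-primary component of an abelian group: elements killed by a power of `p`. -/
def pComponent (G : Type) [AddCommGroup G] (p : ℕ) : AddSubgroup G where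
  carrier := {x | ∃ k : ℕ, p ^ k • x = 0}
  zero_mem' := ⟨0, smul_zero _⟩
  add_mem' := by
    rintro a b ⟨k, hk⟩ ⟨l, hl⟩
    refine ⟨k + l, ?_⟩
    have h1 : p ^ (k + l) • a = 0 := by rw [pow_add, mul_comm, mul_smul, hk, smul_zero]
    have h2 : p ^ (k + l) • b = 0 := by rw [pow_add, mul_smul, hl, smul_zero]
    rw [smul_add, h1, h2, add_zero]
  neg_mem' := by
    rintro a ⟨k, hk⟩
    exact ⟨k, by rw [smul_neg, hk, neg_zero]⟩

theorem AddSubgroup.moduleFinite_of_free {G : Type} [AddCommGroup G]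
    [Module.Finite ℚ (ℚ ⊗[ℤ] G)] (F : AddSubgroup G) [Module.Free ℤ F] : Module.Finite ℤ F := by
  have : Module.Flat ℤ ℚ := IsLocalization.flat ℚ (nonZeroDivisors ℤ)
  have hinj : Function.Injective (F.subtype.toIntLinearMap.baseChange ℚ) := by
    rw [LinearMap.baseChange_eq_ltensor]
    exact Module.Flat.lTensor_preserves_injective_linearMap _ Subtype.coe_injective
  have : Module.Finite ℚ (ℚ ⊗[ℤ] F) := Module.Finite.of_injective _ hinj
  let b := Module.Free.chooseBasis ℤ F
  have : Finite (Module.Free.ChooseBasisIndex ℤ F) :=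
    Module.Finite.finite_basis (Algebra.TensorProduct.basis ℚ b)
  exact Module.Finite.of_basis b

theorem AddMonoidHom.exists_le_ker_nsmul_of_fg {A B : Type*} [AddCommGroup A] [AddCommGroup B]
    (f : A →+ B) (F : AddSubgroup A) [AddGroup.FG F] (hf : ∀ a ∈ F, IsOfFinAddOrder (f a)) :
    ∃ N, 0 < N ∧ F ≤ (N • f).ker := by
  let K := (f.comp F.subtype).range
  have : Finite K := AddCommGroup.finite_of_fg_isAddTorsion K fun ⟨_, ⟨a, ha⟩, hb⟩ ↦
    AddSubmonoid.isOfFinAddOrder_coe.1 (hb ▸ hf a ha)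
  refine ⟨AddMonoid.exponent K, AddMonoid.ExponentExists.of_finite.exponent_pos, fun a ha ↦ ?_⟩
  rw [AddMonoidHom.mem_ker, AddMonoidHom.smul_apply]
  exact congrArg Subtype.val (AddMonoid.exponent_nsmul_eq_zero (⟨f a, ⟨a, ha⟩, rfl⟩ : K))

theorem exists_pow_nsmul_eq_of_divisible {M : Type*} [AddMonoid M] {p : ℕ}
    (hdiv : ∀ x : M, ∃ y, p • y = x) (n : ℕ) (x : M) : ∃ y, p ^ n • y = x := by
  induction n generalizing x with
  | zero => exact ⟨x, by rw [pow_zero, one_smul]⟩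
  | succ n ih =>
    obtain ⟨y, rfl⟩ := ih x
    obtain ⟨z, rfl⟩ := hdiv y
    exact ⟨z, by rw [pow_succ, mul_smul]⟩

section pComponent

variable {G Q : Type} [AddCommGroup G] [AddCommGroup Q] {p : ℕ}

theorem AddMonoidHom.map_mem_pComponent (h : Q →+ G) {x : Q} (hx : x ∈ pComponent Q p) :
    h x ∈ pComponent G p :=
  let ⟨k, hk⟩ := hx
  ⟨k, by rw [← map_nsmul, hk, map_zero]⟩

theorem pow_card_nsmul_eq_zero_of_mem_pComponent (hp : p.Prime) [Finite (pComponent G p)]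
    {a : G} (ha : a ∈ pComponent G p) : p ^ Nat.card (pComponent G p) • a = 0 := by
  obtain ⟨k, hk⟩ := ha
  obtain ⟨j, -, hj⟩ := (Nat.dvd_prime_pow hp).1 (addOrderOf_dvd_of_nsmul_eq_zero hk)
  have hdvd : p ^ j ∣ Nat.card (pComponent G p) := by
    rw [← hj, ← AddSubgroup.addOrderOf_mk (H := pComponent G p) a ⟨k, hk⟩]
    exact addOrderOf_dvd_natCard _
  have hj_le : j ≤ Nat.card (pComponent G p) :=
    (Nat.lt_pow_self hp.one_lt).le.trans (Nat.le_of_dvd Nat.card_pos hdvd)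
  exact addOrderOf_dvd_iff_nsmul_eq_zero.1 (hj ▸ pow_dvd_pow p hj_le)

theorem AddMonoidHom.map_eq_zero_of_mem_pComponent (h : Q →+ G) {e : ℕ}
    (hdiv : ∀ x : Q, ∃ y, p • y = x) (hG : ∀ a ∈ pComponent G p, p ^ e • a = 0) {x : Q}
    (hx : x ∈ pComponent Q p) : h x = 0 := by
  obtain ⟨k, hk⟩ := hx
  obtain ⟨w, rfl⟩ := exists_pow_nsmul_eq_of_divisible hdiv e x
  have hw : w ∈ pComponent Q p := ⟨k + e, by rw [pow_add, mul_smul, hk]⟩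
  rw [map_nsmul, hG _ (h.map_mem_pComponent hw)]

theorem AddSubgroup.eq_top_of_pComponent_le (hQ : IsAddTorsion Q) (H : AddSubgroup Q)
    (hH : ∀ p, p.Prime → pComponent Q p ≤ H) : H = ⊤ := by
  suffices ∀ n ≠ 0, ∀ x : Q, n • x = 0 → x ∈ H by
    refine eq_top_iff.2 fun x _ ↦ ?_
    obtain ⟨n, hn, hnx⟩ := (hQ x).exists_nsmul_eq_zero
    exact this n hn.ne' x hnx
  intro n
  induction n using Nat.recOnPosPrimePosCoprime with
  | prime_pow p k hp _ => exact fun _ x hx ↦ hH p hp ⟨k, hx⟩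
  | zero => exact fun h ↦ absurd rfl h
  | one => exact fun _ x hx ↦ by rw [one_smul] at hx; exact hx ▸ H.zero_mem
  | coprime a b _ _ hab iha ihb =>
    intro _ x hx
    have hax : a • x ∈ H := ihb (by omega) _ (by rw [← mul_smul, mul_comm, hx])
    have hbx : b • x ∈ H := iha (by omega) _ (by rw [← mul_smul, hx])
    obtain ⟨u, v, huv⟩ := Nat.isCoprime_iff_coprime.2 hab
    have hx_eq : x = u • (a • x) + v • (b • x) := by
      rw [← natCast_zsmul, ← natCast_zsmul, smul_smul, smul_smul, ← add_smul, huv, one_smul]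
    exact hx_eq ▸ H.add_mem (H.zsmul_mem hax u) (H.zsmul_mem hbx v)

theorem AddMonoidHom.prod_pow_card_nsmul_eq_zero (hQ : IsAddTorsion Q)
    (hfin : ∀ p : ℕ, p.Prime → Finite (pComponent G p)) (S : Finset ℕ)
    (hdiv : ∀ p : ℕ, p.Prime → p ∉ S → pComponent G p ≠ ⊥ → ∀ x : Q, ∃ y, p • y = x)
    (h : Q →+ G) : (∏ p ∈ S with p.Prime, p ^ Nat.card (pComponent G p)) • h = 0 := by
  set M := ∏ p ∈ S with p.Prime, p ^ Nat.card (pComponent G p)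
  suffices (M • h).ker = ⊤ from AddMonoidHom.ext fun x ↦ (this ▸ AddSubgroup.mem_top x :)
  refine AddSubgroup.eq_top_of_pComponent_le hQ _ fun p hp x hx ↦ ?_
  have := hfin p hp
  have hhx := h.map_mem_pComponent hx
  rw [AddMonoidHom.mem_ker, AddMonoidHom.smul_apply]
  by_cases hpS : p ∈ S
  · obtain ⟨c, hc⟩ : p ^ Nat.card (pComponent G p) ∣ M :=
      Finset.dvd_prod_of_mem _ (Finset.mem_filter.2 ⟨hpS, hp⟩)
    rw [hc, mul_comm, mul_smul, pow_card_nsmul_eq_zero_of_mem_pComponent hp hhx, smul_zero]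
  by_cases hbot : pComponent G p = ⊥
  · rw [hbot, AddSubgroup.mem_bot] at hhx
    rw [hhx, smul_zero]
  have := h.map_eq_zero_of_mem_pComponent (hdiv p hp hpS hbot)
    (fun _ ha ↦ pow_card_nsmul_eq_zero_of_mem_pComponent hp ha) hx
  rw [this, smul_zero]

end pComponent

/-- Let `G` be an abelian group of finite torsion-free rank whose `p`-component is finite for
every prime `p`. If `F` is a full free subgroup of `G` (free with `G/F` torsion) and `G/F` is
`p`-divisible for almost all primes `p` with `T_p(G) ≠ 0`, then `Hom(G, T(G))` is a torsion
group. -/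
theorem hom_into_torsion_is_torsion (G : Type) [AddCommGroup G]
    [Module.Finite ℚ (ℚ ⊗[ℤ] G)]
    (hfin : ∀ p : ℕ, p.Prime → Finite (pComponent G p))
    (F : AddSubgroup G) (hfree : Module.Free ℤ F)
    (hfull : AddMonoid.IsTorsion (G ⧸ F))
    (hdiv : ∃ S : Finset ℕ, ∀ p : ℕ, p.Prime → p ∉ S → pComponent G p ≠ ⊥ →
      ∀ x : G ⧸ F, ∃ y : G ⧸ F, p • y = x) :
    AddMonoid.IsTorsion (G →+ (AddCommGroup.torsion G)) := by
  obtain ⟨S, hS⟩ := hdiv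
  intro f
  have : AddGroup.FG F := Module.Finite.iff_addGroup_fg.1 F.moduleFinite_of_free
  let f' := (AddCommGroup.torsion G).subtype.comp f
  obtain ⟨N, hN, hNF⟩ := f'.exists_le_ker_nsmul_of_fg F fun a _ ↦ (f a).2
  let h : G ⧸ F →+ G := QuotientAddGroup.lift F (N • f') hNF
  have hM := h.prod_pow_card_nsmul_eq_zero hfull hfin S hS
  have hM_pos : 0 < ∏ p ∈ S with p.Prime, p ^ Nat.card (pComponent G p) :=
    Finset.prod_pos fun p hp ↦ pow_pos (Finset.mem_filter.1 hp).2.pos _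
  refine isOfFinAddOrder_iff_nsmul_eq_zero.2 ⟨_ * N, mul_pos hM_pos hN, ?_⟩
  ext x
  have hMx := DFunLike.congr_fun hM (x : G ⧸ F)
  simp only [h, AddMonoidHom.smul_apply, QuotientAddGroup.lift_mk] at hMx
  simpa [f', mul_smul] using hMx
end

section
/- Let G be an abelian group and let L ≤ G contain T(G) such that L/T(G) is the divisible part of G/T(G). Then L is a pure subgroup of G. -/
/-- A subgroup `H` of an abelian group `A` is divisible if every element of `H` is divisible
within `H` by every positive integer. -/
def IsDivisibleSubgroup {A : Type} [AddCommGroup A] (H : AddSubgroup A) : Prop :=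
  ∀ n : ℕ, 0 < n → ∀ x ∈ H, ∃ y ∈ H, n • y = x

/-- Let `G` be an abelian group and let `L ≤ G` contain `T(G)` such that `L/T(G)` is the
divisible part (maximal divisible subgroup) of `G/T(G)`. Then `L` is a pure subgroup of `G`. -/
theorem divisible_part_pullback_is_pure (G : Type) [AddCommGroup G]
    (L : AddSubgroup G) (hTL : AddCommGroup.torsion G ≤ L)
    (hdiv : IsDivisibleSubgroup
      (L.map (QuotientAddGroup.mk' (AddCommGroup.torsion G))))
    (hmax : ∀ D : AddSubgroup (G ⧸ AddCommGroup.torsion G), IsDivisibleSubgroup D →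
      D ≤ L.map (QuotientAddGroup.mk' (AddCommGroup.torsion G))) :
    ∀ n : ℕ, 0 < n → ∀ x ∈ L, (∃ y : G, n • y = x) → ∃ z ∈ L, n • z = x := by
  intro n hn x hx ⟨y, hy⟩
  set T := AddCommGroup.torsion G
  have hximg : QuotientAddGroup.mk' T x ∈ L.map (QuotientAddGroup.mk' T) :=
    ⟨x, hx, rfl⟩
  obtain ⟨w, hw, hwx⟩ := hdiv n hn _ hximg
  obtain ⟨z, hz, rfl⟩ := hw
  have hmem : x - n • z ∈ T := by
    have h : QuotientAddGroup.mk' T (n • z) = QuotientAddGroup.mk' T x := by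
      simpa using hwx
    exact (QuotientAddGroup.eq_iff_sub_mem).mp h.symm
  have htors : y - z ∈ T := by
    have hsm : n • (y - z) ∈ T := by
      have : n • (y - z) = x - n • z := by
        rw [smul_sub, hy]
      rwa [this]
    have : IsOfFinAddOrder (n • (y - z)) := hsm
    exact this.of_nsmul hn.ne'
  have hyL : y ∈ L := by
    have : (y - z) + z ∈ L := L.add_mem (hTL htors) hz
    simpa using this
  exact ⟨y, hyL, hy⟩
end

section
/- Let G be an abelian group with a pushout description: G = L + K where F = L ∩ K is a full free subgroup of G, L/F is the divisible part of G/F and K/F is a reduced complement. Then K is torsion-free and T(G) ≤ L. -/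
open TensorProduct

section Aux

variable {A : Type} [AddCommGroup A]

lemma mem_pComponent_iff {p : ℕ} {x : A} : x ∈ pComponent A p ↔ ∃ k : ℕ, p ^ k • x = 0 :=
  Iff.rfl

/-- Sup of two divisible subgroups is divisible. -/
lemma isDivisible_sup {H₁ H₂ : AddSubgroup A} (h₁ : IsDivisibleSubgroup H₁)
    (h₂ : IsDivisibleSubgroup H₂) : IsDivisibleSubgroup (H₁ ⊔ H₂) := by
  intro n hn x hx
  rw [AddSubgroup.mem_sup] at hx
  obtain ⟨a, ha, b, hb, rfl⟩ := hx
  obtain ⟨a', ha', haa⟩ := h₁ n hn a ha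
  obtain ⟨b', hb', hbb⟩ := h₂ n hn b hb
  exact ⟨a' + b', AddSubgroup.add_mem_sup ha' hb', by rw [smul_add, haa, hbb]⟩

/-- If `Lb` and `Kb` are complementary subgroups, `Lb` is divisible, and every divisible
subgroup of `Kb` is trivial, then every divisible subgroup is contained in `Lb`. -/
lemma divisible_le_of_compl {Lb Kb : AddSubgroup A} (hcompl : IsCompl Lb Kb)
    (hLdiv : IsDivisibleSubgroup Lb)
    (hKred : ∀ E : AddSubgroup A, IsDivisibleSubgroup E → E ≤ Kb → E = ⊥)
    (D : AddSubgroup A) (hD : IsDivisibleSubgroup D) : D ≤ Lb := by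
  set W : AddSubgroup A := D ⊔ Lb with hW
  have hWdiv : IsDivisibleSubgroup W := isDivisible_sup hD hLdiv
  have htop : Lb ⊔ Kb = ⊤ := hcompl.codisjoint.eq_top
  have hbot : Lb ⊓ Kb = ⊥ := hcompl.disjoint.eq_bot
  have hdec : ∀ z : A, ∃ l ∈ Lb, ∃ k ∈ Kb, l + k = z := by
    intro z
    have : z ∈ Lb ⊔ Kb := by rw [htop]; trivial
    exact AddSubgroup.mem_sup.mp this
  have hLW : Lb ≤ W := le_sup_right
  have hDW : D ≤ W := le_sup_left
  have hE' : W ⊓ Kb = ⊥ := by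
    apply hKred _ _ inf_le_right
    intro n hn x hx
    obtain ⟨hxW, hxK⟩ := hx
    obtain ⟨y, hyW, hy⟩ := hWdiv n hn x hxW
    obtain ⟨l, hl, k, hk, hlk⟩ := hdec y
    have hkW : k ∈ W := by
      have hky : k = y - l := by rw [← hlk]; abel
      rw [hky]
      exact sub_mem hyW (hLW hl)
    refine ⟨k, ⟨hkW, hk⟩, ?_⟩
    have h1 : n • k - x ∈ Lb := by
      have heq : n • k - x = -(n • l) := by rw [← hy, ← hlk, smul_add]; abel
      rw [heq]
      exact neg_mem (AddSubgroup.nsmul_mem _ hl n)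
    have h2 : n • k - x ∈ Kb := sub_mem (AddSubgroup.nsmul_mem _ hk n) hxK
    have hmem : n • k - x ∈ Lb ⊓ Kb := ⟨h1, h2⟩
    rw [hbot, AddSubgroup.mem_bot] at hmem
    exact sub_eq_zero.mp hmem
  intro d hd
  obtain ⟨l, hl, k, hk, hlk⟩ := hdec d
  have hkW : k ∈ W := by
    have hkd : k = d - l := by rw [← hlk]; abel
    rw [hkd]
    exact sub_mem (hDW hd) (hLW hl)
  have hmem : k ∈ W ⊓ Kb := ⟨hkW, hk⟩
  rw [hE', AddSubgroup.mem_bot] at hmem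
  rw [← hlk, hmem, add_zero]
  exact hl

/-- In a `p`-divisible group, elements of the `p`-component are divisible by powers of `p`
within the `p`-component. -/
lemma pComponent_pow_div {p : ℕ} (hdvd : ∀ x : A, ∃ y : A, p • y = x) :
    ∀ j : ℕ, ∀ x ∈ pComponent A p, ∃ y ∈ pComponent A p, p ^ j • y = x := by
  intro j
  induction j with
  | zero => intro x hx; exact ⟨x, hx, by rw [pow_zero, one_smul]⟩
  | succ j ih =>
    intro x hx
    obtain ⟨y, hy, hyx⟩ := ih x hx
    obtain ⟨z, hz⟩ := hdvd y
    obtain ⟨k, hk⟩ := hy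
    refine ⟨z, ⟨k + 1, ?_⟩, ?_⟩
    · rw [pow_succ, mul_smul, hz, hk]
    · rw [pow_succ, mul_smul, hz, hyx]

/-- In a `p`-divisible group with `p` prime, the `p`-component is a divisible subgroup. -/
lemma pComponent_divisible {p : ℕ} (hp : p.Prime) (hdvd : ∀ x : A, ∃ y : A, p • y = x) :
    IsDivisibleSubgroup (pComponent A p) := by
  intro n hn x hx
  -- divide first by the p-coprime part, then by the p-power part
  obtain ⟨k, hk⟩ := hx
  set m : ℕ := ordCompl[p] n with hm
  set j : ℕ := n.factorization p with hj
  have hnj : p ^ j * m = n := Nat.ordProj_mul_ordCompl_eq_self n p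
  have hpm : ¬ p ∣ m := Nat.not_dvd_ordCompl hp hn.ne'
  -- coprime step: find y₁ ∈ pComponent with m • y₁ = x
  have hcop : IsCoprime (m : ℤ) ((p : ℤ) ^ k) := by
    rw [show ((p : ℤ) ^ k) = ((p ^ k : ℕ) : ℤ) by push_cast; ring]
    rw [Nat.isCoprime_iff_coprime]
    exact Nat.Coprime.pow_right k (((Nat.Prime.coprime_iff_not_dvd hp).mpr hpm).symm)
  obtain ⟨a, b, hab⟩ := hcop
  have hpkx : ((p : ℤ) ^ k) • x = 0 := by
    have : ((p ^ k : ℕ) : ℤ) • x = 0 := by rw [natCast_zsmul]; exact hk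
    rwa [show ((p : ℤ) ^ k) = ((p ^ k : ℕ) : ℤ) by push_cast; ring]
  have hy₁ : (m : ℤ) • (a • x) = x := by
    rw [smul_smul]
    have : (m : ℤ) * a = 1 - b * (p : ℤ) ^ k := by linarith [hab]
    rw [this, sub_smul, one_smul, mul_smul, hpkx, smul_zero, sub_zero]
  have hxmem : x ∈ pComponent A p := ⟨k, hk⟩
  have hy₁mem : a • x ∈ pComponent A p := AddSubgroup.zsmul_mem _ hxmem a
  -- p-power step
  obtain ⟨y, hy, hyx⟩ := pComponent_pow_div hdvd j (a • x) hy₁mem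
  refine ⟨y, hy, ?_⟩
  rw [← hnj, mul_comm, mul_smul, hyx, ← natCast_zsmul, hy₁]

end Aux

/-- Let `G = L + K` be an abelian group of finite torsion-free rank, where `F = L ∩ K` is a
full free subgroup of `G`, `L/F` is the divisible part of `G/F` and `K/F` is a reduced
complement, and suppose `G/F` is `p`-divisible for every prime `p` with `T_p(G) ≠ 0`.
Then `K` is torsion-free and `T(G) ≤ L`. -/
theorem pushout_decomposition_K_torsion_free (G : Type) [AddCommGroup G]
    [Module.Finite ℚ (ℚ ⊗[ℤ] G)]
    (F L K : AddSubgroup G) (hfree : Module.Free ℤ F)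
    (hFL : F ≤ L) (hFK : F ≤ K) (hsum : L ⊔ K = ⊤) (hint : L ⊓ K = F)
    (htor : AddMonoid.IsTorsion (G ⧸ F))
    (hcompl : IsCompl (L.map (QuotientAddGroup.mk' F)) (K.map (QuotientAddGroup.mk' F)))
    (hLdiv : IsDivisibleSubgroup (L.map (QuotientAddGroup.mk' F)))
    (hKred : ∀ E : AddSubgroup (G ⧸ F), IsDivisibleSubgroup E →
      E ≤ K.map (QuotientAddGroup.mk' F) → E = ⊥)
    (hpdiv : ∀ p : ℕ, p.Prime → pComponent G p ≠ ⊥ →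
      ∀ x : G ⧸ F, ∃ y : G ⧸ F, p • y = x) :
    (∀ x ∈ K, x ∈ AddCommGroup.torsion G → x = 0) ∧
      AddCommGroup.torsion G ≤ L := by
  set φ := QuotientAddGroup.mk' F with hφ
  set Lb := L.map φ with hLb
  set Kb := K.map φ with hKb
  -- Key: for any prime p with T_p(G) ≠ 0, the p-component of G/F maps into Lb
  have hEpL : ∀ p : ℕ, p.Prime → pComponent G p ≠ ⊥ →
      pComponent (G ⧸ F) p ≤ Lb := by
    intro p hp hTp
    refine divisible_le_of_compl hcompl hLdiv hKred _ ?_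
    have hdvd : ∀ x : G ⧸ F, ∃ y : G ⧸ F, p • y = x := hpdiv p hp hTp
    exact pComponent_divisible hp hdvd
  -- Main claim: every element killed by n > 0 maps into Lb
  have key : ∀ n : ℕ, 0 < n → ∀ x : G, n • x = 0 → φ x ∈ Lb := by
    intro n
    induction n using Nat.strong_induction_on with
    | _ n ih =>
      intro hn x hx
      rcases eq_or_lt_of_le (Nat.one_le_iff_ne_zero.mpr hn.ne') with h1 | h1
      · -- n = 1 : x = 0
        have hx0 : x = 0 := by rw [← one_smul ℕ x, h1]; exact hx
        rw [hx0, map_zero]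
        exact zero_mem _
      · -- n > 1 : split off the minFac-primary part
        set p : ℕ := n.minFac with hp
        have hpp : p.Prime := Nat.minFac_prime (by omega)
        set j : ℕ := n.factorization p with hj
        set m : ℕ := ordCompl[p] n with hm
        have hnj : p ^ j * m = n := Nat.ordProj_mul_ordCompl_eq_self n p
        have hpm : ¬ p ∣ m := Nat.not_dvd_ordCompl hpp hn.ne'
        have hjpos : 1 ≤ j := by
          rw [hj]
          exact (Nat.Prime.dvd_iff_one_le_factorization hpp hn.ne').mp (Nat.minFac_dvd n)
        have hmpos : 0 < m := Nat.ordCompl_pos p hn.ne'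
        have hmlt : m < n := by
          have hpj : 1 < p ^ j := by
            calc 1 < p := hpp.one_lt
            _ ≤ p ^ j := Nat.le_self_pow (by omega) p
          calc m = 1 * m := (one_mul m).symm
          _ < p ^ j * m := (Nat.mul_lt_mul_right hmpos).mpr hpj
          _ = n := hnj
        -- y := m • x is p-primary
        set y : G := m • x with hy
        have hpy : p ^ j • y = 0 := by
          rw [hy, ← mul_smul, hnj, hx]
        have hyL : φ y ∈ Lb := by
          by_cases hy0 : y = 0
          · rw [hy0, map_zero]; exact zero_mem _
          · have hTp : pComponent G p ≠ ⊥ := by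
              intro hbot
              have : y ∈ pComponent G p := ⟨j, hpy⟩
              rw [hbot, AddSubgroup.mem_bot] at this
              exact hy0 this
            apply hEpL p hpp hTp
            exact ⟨j, by rw [← map_nsmul, hpy, map_zero]⟩
        -- z := p^j • x is killed by m < n
        set z : G := p ^ j • x with hz
        have hmz : m • z = 0 := by rw [hz, ← mul_smul, mul_comm, hnj, hx]
        have hzL : φ z ∈ Lb := ih m hmlt hmpos z hmz
        -- Bezout
        have hcop : IsCoprime (m : ℤ) ((p : ℤ) ^ j) := by
          rw [show ((p : ℤ) ^ j) = ((p ^ j : ℕ) : ℤ) by push_cast; ring]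
          rw [Nat.isCoprime_iff_coprime]
          exact Nat.Coprime.pow_right j ((Nat.Prime.coprime_iff_not_dvd hpp).mpr hpm).symm
        obtain ⟨a, b, hab⟩ := hcop
        have hxdec : x = a • y + b • z := by
          rw [hy, hz, ← natCast_zsmul x m, ← natCast_zsmul x (p ^ j), smul_smul, smul_smul,
            ← add_smul]
          have : a * (m : ℤ) + b * ((p ^ j : ℕ) : ℤ) = 1 := by push_cast; push_cast at hab; linarith
          rw [this, one_smul]
        rw [hxdec, map_add, map_zsmul, map_zsmul]
        exact add_mem (AddSubgroup.zsmul_mem _ hyL a) (AddSubgroup.zsmul_mem _ hzL b)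
  -- torsion ≤ L
  have htorL : AddCommGroup.torsion G ≤ L := by
    intro x hx
    have hfin : IsOfFinAddOrder x := hx
    obtain ⟨n, hn, hnx⟩ := isOfFinAddOrder_iff_nsmul_eq_zero.mp hfin
    have hxL : φ x ∈ Lb := key n hn x hnx
    obtain ⟨l, hl, hlx⟩ := AddSubgroup.mem_map.mp hxL
    have : l - x ∈ F := by
      have := hlx
      rw [hφ] at this
      simp only [QuotientAddGroup.mk'_apply] at this
      exact (QuotientAddGroup.eq_iff_sub_mem).mp this
    have hxl : x = l - (l - x) := by abel
    rw [hxl]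
    exact sub_mem hl (hFL this)
  refine ⟨?_, htorL⟩
  -- K is torsion-free
  intro x hxK hxT
  have hxL : x ∈ L := htorL hxT
  have hxF : x ∈ F := by rw [← hint]; exact ⟨hxL, hxK⟩
  -- F is free hence torsion-free
  obtain ⟨n, hn, hnx⟩ := isOfFinAddOrder_iff_nsmul_eq_zero.mp hxT
  have : (n : ℤ) • (⟨x, hxF⟩ : F) = 0 := by
    apply Subtype.ext
    simp only [AddSubgroup.coe_zsmul, ZeroMemClass.coe_zero, natCast_zsmul]
    exact hnx
  rcases smul_eq_zero.mp this with h | h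
  · exact absurd (by exact_mod_cast h) hn.ne'
  · exact congrArg Subtype.val h
end
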